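/- For all natural numbers k ≥ 1 and d, there exists a finite simple connected graph G of minimum degree at least d such that every spanning tree of G contains, for every i ∈ {1, …, k}, a vertex of degree exactly i in the tree. -/

import Mathlib

/-!
Induct on `k`, starting from `K_{d+1}`. Given `G`, hang a private copy of `K_{d+1}` from every
vertex by a single bridge. Every spanning tree of the new graph contains all the bridges, and its
restriction to the old vertices is a spanning tree of `G` in which every degree is exactly one
less; so the degrees `2, …, k + 1` occur, and degree `1` occurs because a nontrivial tree has a
leaf.
-/

open SimpleGraph

/-- The degree of a vertex `v` in a simple graph `H`. -/
noncomputable def gdeg {V : Type} (H : SimpleGraph V) (v : V) : ℕ :=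
  Nat.card (H.neighborSet v)

namespace SimpleGraph

variable {V W : Type}

lemma gdeg_eq_degree (H : SimpleGraph V) (v : V) [Fintype (H.neighborSet v)] :
    gdeg H v = H.degree v := by
  rw [gdeg, Nat.card_eq_fintype_card, card_neighborSet_eq_degree]

lemma gdeg_le_gdeg_of_embedding [Finite W] {G : SimpleGraph V} {H : SimpleGraph W} (f : G ↪g H)
    (v : V) : gdeg G v ≤ gdeg H (f v) :=
  Nat.card_le_card_of_injective _ (f.mapNeighborSet v).injective

lemma gdeg_top_fin (d : ℕ) (b : Fin (d + 1)) : gdeg (⊤ : SimpleGraph (Fin (d + 1))) b = d := by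
  rw [gdeg_eq_degree, complete_graph_degree, Fintype.card_fin, Nat.add_sub_cancel]

lemma IsTree.exists_gdeg_eq_one [Finite V] [Nontrivial V] {T : SimpleGraph V} (hT : T.IsTree) :
    ∃ v, gdeg T v = 1 := by
  classical
  have := Fintype.ofFinite V
  obtain ⟨v, hv⟩ := hT.exists_vert_degree_one_of_nontrivial
  exact ⟨v, by rw [gdeg_eq_degree, hv]⟩

/-- `G` with a private copy of `K_{d+1}` hung from every vertex `v` by the single edge
`inl v — inr (v, 0)`. -/
def pendantCliques (G : SimpleGraph V) (d : ℕ) : SimpleGraph (V ⊕ V × Fin (d + 1)) where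
  Adj
    | .inl u, .inl v => G.Adj u v
    | .inl u, .inr (v, b) => u = v ∧ b = 0
    | .inr (v, b), .inl u => u = v ∧ b = 0
    | .inr (u, a), .inr (v, b) => u = v ∧ a ≠ b
  symm := ⟨by
    rintro (u | ⟨u, a⟩) (v | ⟨v, b⟩) h
    exacts [h.symm, h, h, ⟨h.1.symm, h.2.symm⟩]⟩
  loopless := ⟨by
    rintro (u | ⟨u, a⟩) h
    exacts [G.irrefl h, h.2 rfl]⟩

namespace pendantCliques

variable {G : SimpleGraph V} {d : ℕ}

def inlEmbedding (G : SimpleGraph V) (d : ℕ) : G ↪g pendantCliques G d :=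
  ⟨Function.Embedding.inl, Iff.rfl⟩

def cliqueEmbedding (G : SimpleGraph V) (d : ℕ) (v : V) :
    (⊤ : SimpleGraph (Fin (d + 1))) ↪g pendantCliques G d where
  toFun b := .inr (v, b)
  inj' _ _ h := by simpa using h
  map_rel_iff' := and_iff_right rfl

lemma le_gdeg [Finite V] (hG : ∀ v, d ≤ gdeg G v) (x : V ⊕ V × Fin (d + 1)) :
    d ≤ gdeg (pendantCliques G d) x := by
  rcases x with u | ⟨v, b⟩
  · exact (hG u).trans (gdeg_le_gdeg_of_embedding (inlEmbedding G d) u)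
  · exact (gdeg_top_fin d b).ge.trans (gdeg_le_gdeg_of_embedding (cliqueEmbedding G d v) b)

lemma connected (hG : G.Connected) : (pendantCliques G d).Connected := by
  have : Nonempty V := hG.nonempty
  have reach_base : ∀ x : V ⊕ V × Fin (d + 1),
      (pendantCliques G d).Reachable x (.inl (Sum.elim id Prod.fst x)) := by
    rintro (u | ⟨v, b⟩)
    · rfl
    · by_cases hb : b = 0
      · exact Adj.reachable (by exact ⟨rfl, hb⟩)
      · exact (Adj.reachable (v := .inr (v, 0)) (by exact ⟨rfl, hb⟩)).trans
          (Adj.reachable (by exact ⟨rfl, rfl⟩))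
  refine ⟨fun x y => (reach_base x).trans (Reachable.trans ?_ (reach_base y).symm)⟩
  exact (hG.preconnected _ _).map (inlEmbedding G d).toHom

variable {T : SimpleGraph (V ⊕ V × Fin (d + 1))}

/-- The bridges are the only edges leaving the pendant cliques, so every connected spanning
subgraph contains them all. -/
lemma adj_bridge_of_connected (hle : T ≤ pendantCliques G d) (hT : T.Connected) (v : V) :
    T.Adj (.inl v) (.inr (v, 0)) := by
  obtain ⟨p⟩ := hT.preconnected (.inr (v, 0)) (.inl v)
  obtain ⟨⟨⟨x, y⟩, hxy⟩, -, ⟨b, rfl⟩, hy⟩ :=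
    p.exists_boundary_dart (Set.range fun b => .inr (v, b)) ⟨0, rfl⟩ (by simp)
  rcases y with u | ⟨u, c⟩
  · obtain ⟨rfl, rfl⟩ := hle hxy
    exact hxy.symm
  · obtain ⟨rfl, -⟩ := hle hxy
    exact absurd ⟨c, rfl⟩ hy

/-- Contracting every pendant clique onto its base vertex turns walks of `T` into walks of
`T.comap Sum.inl`. -/
lemma connected_comap_inl (hle : T ≤ pendantCliques G d) (hT : T.Connected) :
    (T.comap Sum.inl).Connected := by
  have : Nonempty V := by
    rcases hT.nonempty with ⟨⟨v⟩ | ⟨⟨v, -⟩⟩⟩ <;> exact ⟨v⟩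
  have hstep : T.Adj ≤
      Function.onFun (Relation.ReflTransGen (T.comap Sum.inl).Adj) (Sum.elim id Prod.fst) := by
    rintro (x | ⟨x, a⟩) (y | ⟨y, b⟩) hxy
    · exact .single hxy
    all_goals obtain ⟨rfl, -⟩ := hle hxy; exact .refl
  refine ⟨fun u w => (reachable_iff_reflTransGen _ _).2 ?_⟩
  exact Relation.ReflTransGen.lift' _ hstep _ _
    ((reachable_iff_reflTransGen _ _).1 (hT.preconnected (.inl u) (.inl w)))

lemma isTree_comap_inl (hle : T ≤ pendantCliques G d) (hT : T.IsTree) :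
    (T.comap Sum.inl).IsTree :=
  ⟨connected_comap_inl hle hT.connected,
    hT.isAcyclic.embedding (Embedding.comap Function.Embedding.inl T)⟩

lemma comap_inl_le (hle : T ≤ pendantCliques G d) : T.comap Sum.inl ≤ G :=
  fun _ _ h => hle h

lemma gdeg_inl [Finite V] (hle : T ≤ pendantCliques G d) (hT : T.Connected) (v : V) :
    gdeg T (.inl v) = gdeg (T.comap Sum.inl) v + 1 := by
  have hnbr : T.neighborSet (.inl v) =
      insert (.inr (v, 0)) (Sum.inl '' (T.comap Sum.inl).neighborSet v) := by
    ext (u | ⟨u, b⟩)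
    · simp
    · refine ⟨fun h => ?_, ?_⟩
      · obtain ⟨rfl, rfl⟩ := hle h
        exact Set.mem_insert _ _
      · rintro (h | ⟨_, -, h⟩)
        · rw [h]
          exact adj_bridge_of_connected hle hT v
        · exact absurd h Sum.inl_ne_inr
  rw [gdeg, gdeg, Nat.card_coe_set_eq, Nat.card_coe_set_eq, hnbr,
    Set.ncard_insert_of_notMem (by simp), Set.ncard_image_of_injective _ Sum.inl_injective]

end pendantCliques

end SimpleGraph

theorem stmt_4 (k d : ℕ) :
    ∃ (V : Type) (_ : Fintype V) (G : SimpleGraph V),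
      G.Connected ∧ (∀ v, d ≤ gdeg G v) ∧
      ∀ T : SimpleGraph V, T ≤ G → T.IsTree →
        ∀ i, 1 ≤ i → i ≤ k → ∃ v, gdeg T v = i := by
  induction k with
  | zero =>
    exact ⟨Fin (d + 1), inferInstance, ⊤, connected_top, fun v => (gdeg_top_fin d v).ge,
      fun _ _ _ i hi hik => absurd (hi.trans hik) (by omega)⟩
  | succ k ih =>
    obtain ⟨V, _, G, hG, hdeg, htree⟩ := ih
    refine ⟨V ⊕ V × Fin (d + 1), inferInstance, pendantCliques G d, pendantCliques.connected hG,
      pendantCliques.le_gdeg hdeg, fun T hle hT i hi hik => ?_⟩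
    obtain rfl | hi := hi.eq_or_lt
    · obtain ⟨v⟩ := hG.nonempty
      have : Nontrivial (V ⊕ V × Fin (d + 1)) := ⟨.inl v, .inr (v, 0), Sum.inl_ne_inr⟩
      exact hT.exists_gdeg_eq_one
    · obtain ⟨v, hv⟩ := htree _ (pendantCliques.comap_inl_le hle)
        (pendantCliques.isTree_comap_inl hle hT) (i - 1) (by omega) (by omega)
      exact ⟨.inl v, by rw [pendantCliques.gdeg_inl hle hT.connected, hv]; omega⟩
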